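/- Let D be an n×n real diagonal matrix with strictly positive diagonal entries and A a symmetric n×n real matrix such that both D − A and D − A·D⁻¹·A are positive definite. Let M̂ be a symmetric positive definite n×n matrix and ε ≥ 0 a real number such that M̂ ≈_ε (D − A·D⁻¹·A). Then (D − A)⁻¹ ≈_ε (1/2)·( D⁻¹ + (I + D⁻¹·A)·M̂⁻¹·(I + A·D⁻¹) ). -/

import Mathlib

/-!
Because `(D - A)(I + D⁻¹A) = D - AD⁻¹A`, the exact identity
`(D - A)⁻¹ = ½(D⁻¹ + (I + D⁻¹A)(D - AD⁻¹A)⁻¹(I + AD⁻¹))` holds. The relation `≈_ε` is symmetric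
and is preserved by inverting positive definite matrices (inversion is antitone in the Loewner
order), by congruences `X ↦ BXBᵀ`, by sums and by nonnegative scalings, and `D⁻¹ ≈_ε D⁻¹` since
`ε ≥ 0`. So replacing `(D - AD⁻¹A)⁻¹` by `M̂⁻¹` in the identity costs exactly `≈_ε`.
-/

open Matrix

/-- `X ≈_ε Y` : both `exp(ε) • X - Y` and `Y - exp(-ε) • X` are positive semidefinite. -/
def MApprox {n : ℕ} (ε : ℝ) (X Y : Matrix (Fin n) (Fin n) ℝ) : Prop :=
  (Real.exp ε • X - Y).PosSemidef ∧ (Y - Real.exp (-ε) • X).PosSemidef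

open scoped ComplexOrder

namespace Matrix

variable {m 𝕜 : Type*} [Fintype m] [DecidableEq m]

theorem inv_smul_of_ne_zero [Field 𝕜] {c : 𝕜} (hc : c ≠ 0) {X : Matrix m m 𝕜}
    (hX : IsUnit X.det) : (c • X)⁻¹ = c⁻¹ • X⁻¹ :=
  inv_eq_left_inv (by simp [smul_smul, hc, nonsing_inv_mul _ hX])

theorem inv_sub_eq_half_smul [Field 𝕜] [NeZero (2 : 𝕜)] {D A : Matrix m m 𝕜} (hD : IsUnit D)
    (hS : IsUnit (D - A * D⁻¹ * A)) :
    (D - A)⁻¹ = (1 / 2 : 𝕜) • (D⁻¹ + (1 + D⁻¹ * A) * (D - A * D⁻¹ * A)⁻¹ * (1 + A * D⁻¹)) := by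
  have := hD.invertible
  have := hS.invertible
  have hfactor : (D - A) * (1 + D⁻¹ * A) = D - A * D⁻¹ * A := by
    simp only [Matrix.mul_add, Matrix.sub_mul, Matrix.mul_one, ← Matrix.mul_assoc,
      Matrix.mul_inv_of_invertible, Matrix.one_mul]
    abel
  apply inv_eq_right_inv
  rw [Matrix.mul_smul, Matrix.mul_add, ← Matrix.mul_assoc, ← Matrix.mul_assoc, hfactor,
    Matrix.mul_inv_of_invertible, Matrix.one_mul, Matrix.sub_mul, Matrix.mul_inv_of_invertible,
    sub_add_add_cancel, ← two_smul 𝕜, smul_smul, one_div, inv_mul_cancel₀ two_ne_zero, one_smul]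

theorem PosDef.posSemidef_inv_sub_inv [RCLike 𝕜] {X Y : Matrix m m 𝕜} (hX : X.PosDef)
    (hY : Y.PosDef) (h : (X - Y).PosSemidef) : (Y⁻¹ - X⁻¹).PosSemidef := by
  have := hX.isUnit.invertible
  have := hY.isUnit.invertible
  have hXinv : (X⁻¹)ᴴ = X⁻¹ := hX.inv.isHermitian
  have hid : Y⁻¹ - X⁻¹ =
      X⁻¹ * (X - Y) * X⁻¹ + (X⁻¹ * (X - Y)) * Y⁻¹ * (X⁻¹ * (X - Y))ᴴ := by
    rw [conjTranspose_mul, h.isHermitian.eq, hXinv]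
    simp only [sub_mul, mul_sub, Matrix.mul_assoc,
      Matrix.inv_mul_cancel_left_of_invertible, Matrix.mul_inv_of_invertible,
      Matrix.inv_mul_of_invertible, Matrix.mul_one, Matrix.one_mul]
    abel
  rw [hid]
  refine .add ?_ (hY.inv.posSemidef.mul_mul_conjTranspose_same _)
  simpa only [hXinv] using h.mul_mul_conjTranspose_same X⁻¹

end Matrix

namespace MApprox

variable {n : ℕ} {ε : ℝ} {X Y : Matrix (Fin n) (Fin n) ℝ}

theorem refl (hε : 0 ≤ ε) (hX : X.PosSemidef) : MApprox ε X X := by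
  refine ⟨?_, ?_⟩
  · rw [← one_smul ℝ X, smul_smul, mul_one, ← sub_smul]
    exact hX.smul (by linarith [Real.add_one_le_exp ε])
  · rw [← one_smul ℝ X, smul_smul, mul_one, ← sub_smul]
    exact hX.smul (by simpa using hε)

theorem symm (h : MApprox ε X Y) : MApprox ε Y X := by
  have hexp : Real.exp ε * Real.exp (-ε) = 1 := by
    rw [← Real.exp_add, add_neg_cancel, Real.exp_zero]
  constructor
  · simpa only [smul_sub, smul_smul, hexp, one_smul] using h.2.smul (Real.exp_pos ε).le
  · simpa only [smul_sub, smul_smul, mul_comm, hexp, one_smul]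
      using h.1.smul (Real.exp_pos (-ε)).le

theorem add {X' Y' : Matrix (Fin n) (Fin n) ℝ} (h : MApprox ε X Y) (h' : MApprox ε X' Y') :
    MApprox ε (X + X') (Y + Y') := by
  constructor
  · simpa only [smul_add, add_sub_add_comm] using h.1.add h'.1
  · simpa only [smul_add, add_sub_add_comm] using h.2.add h'.2

theorem smul {c : ℝ} (h : MApprox ε X Y) (hc : 0 ≤ c) : MApprox ε (c • X) (c • Y) := by
  constructor
  · simpa only [smul_sub, smul_comm c] using h.1.smul hc
  · simpa only [smul_sub, smul_comm c] using h.2.smul hc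

theorem mul_mul_conjTranspose_same (h : MApprox ε X Y) (B : Matrix (Fin n) (Fin n) ℝ) :
    MApprox ε (B * X * Bᴴ) (B * Y * Bᴴ) := by
  constructor
  · simpa only [Matrix.mul_sub, Matrix.sub_mul, Matrix.mul_smul, Matrix.smul_mul]
      using h.1.mul_mul_conjTranspose_same B
  · simpa only [Matrix.mul_sub, Matrix.sub_mul, Matrix.mul_smul, Matrix.smul_mul]
      using h.2.mul_mul_conjTranspose_same B

theorem inv (hX : X.PosDef) (hY : Y.PosDef) (h : MApprox ε X Y) : MApprox ε X⁻¹ Y⁻¹ := by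
  have hdet := (isUnit_iff_isUnit_det X).mp hX.isUnit
  constructor
  · have := PosDef.posSemidef_inv_sub_inv hY (hX.smul (Real.exp_pos (-ε))) h.2
    rwa [inv_smul_of_ne_zero (Real.exp_ne_zero _) hdet, ← Real.exp_neg, neg_neg] at this
  · have := PosDef.posSemidef_inv_sub_inv (hX.smul (Real.exp_pos ε)) hY h.1
    rwa [inv_smul_of_ne_zero (Real.exp_ne_zero _) hdet, ← Real.exp_neg] at this

end MApprox

theorem stmt2_general {n : ℕ} (d : Fin n → ℝ) (hd : ∀ i, 0 < d i)
    (D : Matrix (Fin n) (Fin n) ℝ) (hD : D = Matrix.diagonal d)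
    (A Mhat : Matrix (Fin n) (Fin n) ℝ) (hA : A.IsSymm)
    (hDADA : (D - A * D⁻¹ * A).PosDef)
    (hMhatPD : Mhat.PosDef)
    (ε : ℝ) (hε : 0 ≤ ε)
    (happrox : MApprox ε Mhat (D - A * D⁻¹ * A)) :
    MApprox ε (D - A)⁻¹
      ((1 / 2 : ℝ) • (D⁻¹ + (1 + D⁻¹ * A) * Mhat⁻¹ * (1 + A * D⁻¹))) := by
  have hDpd : D.PosDef := hD ▸ posDef_diagonal_iff.mpr hd
  have hBH : (1 + D⁻¹ * A)ᴴ = 1 + A * D⁻¹ := by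
    rw [conjTranspose_add, conjTranspose_one, conjTranspose_mul, hDpd.inv.isHermitian.eq,
      conjTranspose_eq_transpose_of_trivial, hA.eq]
  rw [inv_sub_eq_half_smul hDpd.isUnit hDADA.isUnit, ← hBH]
  exact ((MApprox.refl hε hDpd.inv.posSemidef).add
    ((happrox.symm.inv hDADA hMhatPD).mul_mul_conjTranspose_same _)).smul (by norm_num)

/-- if `D - A` and `D - A D⁻¹ A` are positive definite, `M̂` is a symmetric
positive definite matrix with `M̂ ≈_ε (D - A D⁻¹ A)`, then
`(D - A)⁻¹ ≈_ε (1/2) • (D⁻¹ + (I + D⁻¹ A) M̂⁻¹ (I + A D⁻¹))`. -/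
theorem stmt2 {n : ℕ} (d : Fin n → ℝ) (hd : ∀ i, 0 < d i)
    (D : Matrix (Fin n) (Fin n) ℝ) (hD : D = Matrix.diagonal d)
    (A Mhat : Matrix (Fin n) (Fin n) ℝ) (hA : A.IsSymm)
    (hDA : (D - A).PosDef) (hDADA : (D - A * D⁻¹ * A).PosDef)
    (hMhatSymm : Mhat.IsSymm) (hMhatPD : Mhat.PosDef)
    (ε : ℝ) (hε : 0 ≤ ε)
    (happrox : MApprox ε Mhat (D - A * D⁻¹ * A)) :
    MApprox ε (D - A)⁻¹
      ((1 / 2 : ℝ) • (D⁻¹ + (1 + D⁻¹ * A) * Mhat⁻¹ * (1 + A * D⁻¹))) :=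
  stmt2_general d hd D hD A Mhat hA hDADA hMhatPD ε hε happrox
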